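/- There exists ε₀ > 0 such that for every ε ∈ (0, ε₀) and every minimizing extremal (ω, θ, λ) for ε (with ω defined on [0,L]): ω₁(t) ≤ 2·ε^{m̄} and |ω₂(t)| ≤ 2ε for every t ∈ [0,L]. -/

import Mathlib

open MeasureTheory

/-- `P(x₁,x₂) = x₁² − x₂^m`. -/
noncomputable def Pf (m : ℕ) (x : ℝ × ℝ) : ℝ := x.1 ^ 2 - x.2 ^ m

/-- `Q(x₁,x₂) = 4x₁(x₁² − x₂^m)`. -/
noncomputable def Qf (m : ℕ) (x : ℝ × ℝ) : ℝ := 4 * x.1 * (x.1 ^ 2 - x.2 ^ m)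

/-- The reference curve `ω̄(t) = (t^{m/2}, t)`; in particular `A_ε = barCurve m ε`. -/
noncomputable def barCurve (m : ℕ) (t : ℝ) : ℝ × ℝ := (t ^ ((m : ℝ) / 2), t)

/-- Euclidean length `∫₀^τ ‖ζ'(t)‖ dt` of a curve with (a.e.) derivative `ζ'`. -/
noncomputable def eLength (ζ' : ℝ → ℝ × ℝ) (τ : ℝ) : ℝ :=
  ∫ t in (0:ℝ)..τ, Real.sqrt ((ζ' t).1 ^ 2 + (ζ' t).2 ^ 2)

/-- `L(ω̄_ε) = ∫₀^ε √(1 + (m/2)² t^{m−2}) dt`. -/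
noncomputable def barLength (m : ℕ) (ε : ℝ) : ℝ :=
  ∫ t in (0:ℝ)..ε, Real.sqrt (1 + ((m : ℝ) / 2) ^ 2 * t ^ (m - 2))

/-- A constrained competitor for `ε`: a Lipschitz curve `ζ : [0,τ] → ℝ²` with a.e. derivative
`ζ'`, joining `A₀ = (0,0)` to `A_ε = (ε^{m/2}, ε)`, with `∫₀^τ P(ζ(t))² ζ₂'(t) dt = 0`. -/
def IsCompetitor (m : ℕ) (ε τ : ℝ) (ζ ζ' : ℝ → ℝ × ℝ) : Prop :=
  0 ≤ τ ∧
  (∃ K : NNReal, LipschitzOnWith K ζ (Set.Icc 0 τ)) ∧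
  ζ 0 = ((0 : ℝ), (0 : ℝ)) ∧
  ζ τ = barCurve m ε ∧
  (∀ᵐ t ∂volume, t ∈ Set.Icc (0:ℝ) τ → HasDerivAt ζ (ζ' t) t) ∧
  (∫ t in (0:ℝ)..τ, (Pf m (ζ t)) ^ 2 * (ζ' t).2) = 0

/-- A minimizing extremal for `ε`: `(ω, θ, λ)` solving the extremal ODE system on `[0,L]`,
with `ω` a constrained competitor (parametrized by arc length, hence of length `L`),
minimizing the length among all constrained competitors, and whose image differs from
that of `ω̄_ε`. -/
def IsMinExtremal (m : ℕ) (ε L lam : ℝ) (ω : ℝ → ℝ × ℝ) (θ : ℝ → ℝ) : Prop :=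
  0 < L ∧
  (∀ t ∈ Set.Icc (0:ℝ) L, HasDerivAt ω (Real.cos (θ t), Real.sin (θ t)) t) ∧
  (∀ t ∈ Set.Icc (0:ℝ) L, HasDerivAt θ (lam * Qf m (ω t)) t) ∧
  IsCompetitor m ε L ω (fun t => (Real.cos (θ t), Real.sin (θ t))) ∧
  (∀ τ (ζ ζ' : ℝ → ℝ × ℝ), IsCompetitor m ε τ ζ ζ' → L ≤ eLength ζ' τ) ∧
  ω '' Set.Icc (0:ℝ) L ≠ barCurve m '' Set.Icc (0:ℝ) ε

/-!
Comparing with the reference curve `ω̄_ε`, minimality gives `L - ε ≤ (m/2)² ε^{m-1}`; hence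
`|ω₂| ≤ L ≤ 2ε`, and the defect `∫₀^L (1 - sin θ) = L - ε` is tiny. If `N = max |ω₁|` exceeded
`2ε^{m/2}`, then `|ω₂|^m ≪ N²`, so `P(ω)²` is of order `N⁴` on the band
`7N/10 ≤ |ω₁| ≤ 8N/10`. As `P(ω)² ≥ 0`, the constraint `∫ P(ω)² sin θ = 0` forces this band to
have length `O(L - ε)`. Crossing it costs horizontal motion `N/10 ≤ ∫_band |cos θ|`, which by
AM-GM and `cos² θ ≤ 2 (1 - sin θ)` is `O(L - ε)` as well. So `N = O(m² ε^{m-1})`, which is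
incompatible with `N > 2ε^{m/2}` for small `ε`.
-/

open Set Real

noncomputable def barCurveDeriv (m : ℕ) (t : ℝ) : ℝ × ℝ :=
  ((m : ℝ) / 2 * t ^ ((m : ℝ) / 2 - 1), 1)

section ReferenceCurve

variable {m : ℕ}

lemma one_le_half_cast (hm : 2 ≤ m) : 1 ≤ (m : ℝ) / 2 := by
  rw [le_div_iff₀ two_pos, one_mul]; exact_mod_cast hm

lemma hasDerivAt_barCurve (hm : 2 ≤ m) (t : ℝ) :
    HasDerivAt (barCurve m) (barCurveDeriv m t) t :=
  (hasDerivAt_rpow_const (Or.inr (one_le_half_cast hm))).prodMk (hasDerivAt_id t)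

lemma rpow_half_sq {t : ℝ} (ht : 0 ≤ t) : (t ^ ((m : ℝ) / 2)) ^ 2 = t ^ m := by
  rw [← rpow_mul_natCast ht, Nat.cast_ofNat, div_mul_cancel₀ _ two_ne_zero, rpow_natCast]

lemma Pf_barCurve {t : ℝ} (ht : 0 ≤ t) : Pf m (barCurve m t) = 0 := by
  rw [Pf, barCurve, rpow_half_sq ht, sub_self]

lemma sq_barCurveDeriv_fst (hm : 2 ≤ m) {t : ℝ} (ht : 0 ≤ t) :
    (barCurveDeriv m t).1 ^ 2 = ((m : ℝ) / 2) ^ 2 * t ^ (m - 2) := by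
  rw [barCurveDeriv, mul_pow, ← rpow_mul_natCast ht, ← rpow_natCast t (m - 2)]
  congr 2
  push_cast [Nat.cast_sub hm]
  ring

lemma norm_barCurveDeriv_le {t ε : ℝ} (hm : 2 ≤ m) (ht : t ∈ Icc 0 ε) :
    ‖barCurveDeriv m t‖ ≤ (m : ℝ) / 2 * ε ^ ((m : ℝ) / 2 - 1) + 1 := by
  have hm0 : (0 : ℝ) ≤ (m : ℝ) / 2 := by positivity
  have hpow : t ^ ((m : ℝ) / 2 - 1) ≤ ε ^ ((m : ℝ) / 2 - 1) :=
    rpow_le_rpow ht.1 ht.2 (sub_nonneg.2 (one_le_half_cast hm))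
  rw [barCurveDeriv, Prod.norm_def, norm_mul, norm_one, Real.norm_of_nonneg hm0,
    Real.norm_of_nonneg (rpow_nonneg ht.1 _)]
  exact max_le (le_add_of_le_of_nonneg (mul_le_mul_of_nonneg_left hpow hm0) zero_le_one)
    (le_add_of_nonneg_left (mul_nonneg hm0 (rpow_nonneg (ht.1.trans ht.2) _)))

lemma barCurve_isCompetitor (hm : 2 ≤ m) {ε : ℝ} (hε : 0 ≤ ε) :
    IsCompetitor m ε ε (barCurve m) (barCurveDeriv m) := by
  refine ⟨hε, ⟨((m : ℝ) / 2 * ε ^ ((m : ℝ) / 2 - 1) + 1).toNNReal, ?_⟩, ?_, rfl,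
    ae_of_all _ fun t _ => hasDerivAt_barCurve hm t, ?_⟩
  · refine (convex_Icc 0 ε).lipschitzOnWith_of_nnnorm_hasDerivWithin_le
      (fun t _ => (hasDerivAt_barCurve hm t).hasDerivWithinAt) fun t ht => ?_
    rw [← norm_toNNReal]
    exact Real.toNNReal_le_toNNReal (norm_barCurveDeriv_le hm ht)
  · have hp : (m : ℝ) / 2 ≠ 0 := by positivity
    simp [barCurve, zero_rpow hp]
  · refine (intervalIntegral.integral_congr fun t ht => ?_).trans intervalIntegral.integral_zero
    rw [uIcc_of_le hε] at ht
    simp [Pf_barCurve ht.1]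

lemma eLength_barCurveDeriv_le (hm : 2 ≤ m) {ε : ℝ} (hε : 0 ≤ ε) :
    eLength (barCurveDeriv m) ε ≤ ε + ((m : ℝ) / 2) ^ 2 * ε ^ (m - 1) := by
  set c := ((m : ℝ) / 2) ^ 2 * ε ^ (m - 2)
  have hpt : ∀ t ∈ Icc 0 ε,
      √((barCurveDeriv m t).1 ^ 2 + (barCurveDeriv m t).2 ^ 2) ≤ 1 + c := by
    intro t ht
    have hc : (barCurveDeriv m t).1 ^ 2 ≤ c := by
      rw [sq_barCurveDeriv_fst hm ht.1]
      exact mul_le_mul_of_nonneg_left (pow_le_pow_left₀ ht.1 ht.2 _) (by positivity)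
    rw [sqrt_le_iff, show (barCurveDeriv m t).2 = 1 from rfl]
    exact ⟨by positivity, by nlinarith [sq_nonneg (barCurveDeriv m t).1]⟩
  have hcont : Continuous fun t => √((barCurveDeriv m t).1 ^ 2 + (barCurveDeriv m t).2 ^ 2) := by
    have := continuous_rpow_const (sub_nonneg.2 (one_le_half_cast hm))
    simp only [barCurveDeriv]
    fun_prop
  calc eLength (barCurveDeriv m) ε ≤ ∫ _ in (0 : ℝ)..ε, (1 + c) :=
        intervalIntegral.integral_mono_on hε (hcont.intervalIntegrable _ _)
          intervalIntegrable_const hpt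
    _ = ε + ((m : ℝ) / 2) ^ 2 * ε ^ (m - 1) := by
        rw [intervalIntegral.integral_const, smul_eq_mul, sub_zero,
          show m - 1 = m - 2 + 1 by omega, pow_succ]
        ring

lemma IsMinExtremal.length_le (hm : 2 ≤ m) {ε L lam : ℝ} {ω : ℝ → ℝ × ℝ} {θ : ℝ → ℝ}
    (hε : 0 ≤ ε) (h : IsMinExtremal m ε L lam ω θ) :
    L ≤ ε + ((m : ℝ) / 2) ^ 2 * ε ^ (m - 1) :=
  (h.2.2.2.2.1 ε _ _ (barCurve_isCompetitor hm hε)).trans (eLength_barCurveDeriv_le hm hε)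

end ReferenceCurve

section Integrals

variable {α : Type*} [MeasurableSpace α] {μ : Measure α}

lemma mul_measureReal_le_of_setIntegral_mul_eq_zero {I B : Set α} {f g : α → ℝ} {c M : ℝ}
    (hI : MeasurableSet I) (hIμ : μ I ≠ ⊤) (hB : MeasurableSet B) (hBI : B ⊆ I)
    (hg : IntegrableOn g I μ) (hfg : IntegrableOn (fun x => f x * g x) I μ)
    (hg1 : ∀ x ∈ I, g x ≤ 1) (hf0 : ∀ x ∈ I, 0 ≤ f x) (hfM : ∀ x ∈ I, f x ≤ M)
    (hfc : ∀ x ∈ B, c ≤ f x) (h0 : ∫ x in I, f x * g x ∂μ = 0) :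
    c * μ.real B ≤ M * ∫ x in I, (1 - g x) ∂μ := by
  have hpt : ∀ x ∈ I, B.indicator (fun _ => c) x - M * (1 - g x) ≤ f x * g x := by
    intro x hx
    have hind : B.indicator (fun _ => c) x ≤ f x := by
      by_cases hxB : x ∈ B
      · simpa [hxB] using hfc x hxB
      · simpa [hxB] using hf0 x hx
    nlinarith [hfM x hx, hg1 x hx]
  have hind : IntegrableOn (B.indicator fun _ => c) I μ := (integrableOn_const hIμ).indicator hB
  have hdef : IntegrableOn (fun x => M * (1 - g x)) I μ :=
    ((integrableOn_const hIμ).sub hg).const_mul M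
  have := setIntegral_mono_on (f := fun x => B.indicator (fun _ => c) x - M * (1 - g x))
    (hind.sub hdef) hfg hI hpt
  rw [integral_sub hind hdef, integral_const_mul, h0, integral_indicator_const _ hB,
    measureReal_restrict_apply hB, inter_eq_left.2 hBI, smul_eq_mul] at this
  linarith

lemma two_mul_mul_setIntegral_abs_le {s : Set α} {h : α → ℝ} (c : ℝ) (hs : μ s ≠ ⊤)
    (hh : IntegrableOn h s μ) (hh2 : IntegrableOn (fun x => h x ^ 2) s μ) :
    2 * c * ∫ x in s, |h x| ∂μ ≤ c ^ 2 * μ.real s + ∫ x in s, h x ^ 2 ∂μ := by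
  have hpt : ∀ x, 2 * c * |h x| ≤ c ^ 2 + h x ^ 2 := fun x => by
    nlinarith [sq_nonneg (|h x| - c), sq_abs (h x)]
  calc 2 * c * ∫ x in s, |h x| ∂μ = ∫ x in s, 2 * c * |h x| ∂μ := (integral_const_mul _ _).symm
    _ ≤ ∫ x in s, (c ^ 2 + h x ^ 2) ∂μ :=
        setIntegral_mono (hh.abs.const_mul _) ((integrableOn_const hs).add hh2) hpt
    _ = c ^ 2 * μ.real s + ∫ x in s, h x ^ 2 ∂μ := by
        rw [integral_add (integrableOn_const (C := c ^ 2) hs) hh2, setIntegral_const,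
          smul_eq_mul, mul_comm]

end Integrals

lemma ContinuousOn.exists_crossing {φ : ℝ → ℝ} {x y t a b : ℝ} (hφ : ContinuousOn φ (Icc x y))
    (hx : φ x ≤ a) (ht : t ∈ Icc x y) (hb : b ≤ φ t) :
    ∃ t₁ t₂, x ≤ t₁ ∧ t₁ ≤ t₂ ∧ t₂ ≤ y ∧ φ t₁ ≤ a ∧ b ≤ φ t₂ ∧ Ioo t₁ t₂ ⊆ φ ⁻¹' Icc a b := by
  set S := Icc x t ∩ φ ⁻¹' Ici b
  have hS : IsClosed S :=
    (hφ.mono (Icc_subset_Icc_right ht.2)).preimage_isClosed_of_isClosed isClosed_Icc isClosed_Ici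
  have hSbdd : BddBelow S := ⟨x, fun u hu => hu.1.1⟩
  obtain ⟨⟨hxt₂, ht₂t⟩, hbt₂⟩ : sInf S ∈ S := hS.csInf_mem ⟨t, ⟨ht.1, le_rfl⟩, hb⟩ hSbdd
  set t₂ := sInf S
  set S' := Icc x t₂ ∩ φ ⁻¹' Iic a
  have hS' : IsClosed S' :=
    (hφ.mono (Icc_subset_Icc_right (ht₂t.trans ht.2))).preimage_isClosed_of_isClosed
      isClosed_Icc isClosed_Iic
  have hS'bdd : BddAbove S' := ⟨t₂, fun u hu => hu.1.2⟩
  obtain ⟨⟨hxt₁, ht₁t₂⟩, hat₁⟩ : sSup S' ∈ S' := hS'.csSup_mem ⟨x, ⟨le_rfl, hxt₂⟩, hx⟩ hS'bdd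
  refine ⟨sSup S', t₂, hxt₁, ht₁t₂, ht₂t.trans ht.2, hat₁, hbt₂, fun u hu => ⟨?_, ?_⟩⟩
  · by_contra! hua
    exact hu.1.not_ge (le_csSup hS'bdd ⟨⟨hxt₁.trans hu.1.le, hu.2.le⟩, hua.le⟩)
  · by_contra! hub
    exact hu.2.not_ge (csInf_le hSbdd ⟨⟨hxt₁.trans hu.1.le, hu.2.le.trans ht₂t⟩, hub.le⟩)

lemma sub_le_setIntegral_abs_deriv {f f' : ℝ → ℝ} {x y t a b : ℝ}
    (hf : ∀ u ∈ Icc x y, HasDerivAt f (f' u) u) (hf' : IntegrableOn f' (Icc x y))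
    (hx : |f x| ≤ a) (ht : t ∈ Icc x y) (hb : b ≤ |f t|) :
    b - a ≤ ∫ u in Icc x y ∩ (fun u => |f u|) ⁻¹' Icc a b, |f' u| := by
  have hcont : ContinuousOn f (Icc x y) := fun u hu => (hf u hu).continuousAt.continuousWithinAt
  obtain ⟨t₁, t₂, hxt₁, ht₁₂, ht₂y, hat₁, hbt₂, hband⟩ := hcont.abs.exists_crossing hx ht hb
  have hsub : uIcc t₁ t₂ ⊆ Icc x y := by
    rw [uIcc_of_le ht₁₂]; exact Icc_subset_Icc hxt₁ ht₂y
  have hFTC : ∫ u in t₁..t₂, f' u = f t₂ - f t₁ :=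
    intervalIntegral.integral_eq_sub_of_hasDerivAt (fun u hu => hf u (hsub hu))
      (hf'.mono_set hsub).intervalIntegrable
  calc b - a ≤ |f t₂| - |f t₁| := by linarith
    _ ≤ |f t₂ - f t₁| := abs_sub_abs_le_abs_sub _ _
    _ = |∫ u in t₁..t₂, f' u| := by rw [hFTC]
    _ ≤ ∫ u in t₁..t₂, |f' u| := intervalIntegral.abs_integral_le_integral_abs ht₁₂
    _ = ∫ u in Ioo t₁ t₂, |f' u| := by
        rw [intervalIntegral.integral_of_le ht₁₂, integral_Ioc_eq_integral_Ioo]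
    _ ≤ ∫ u in Icc x y ∩ (fun u => |f u|) ⁻¹' Icc a b, |f' u| := by
        refine setIntegral_mono_set (hf'.mono_set inter_subset_left).abs
          (Filter.Eventually.of_forall fun u => abs_nonneg _)
          (Filter.Eventually.of_forall fun u hu => ?_)
        exact ⟨Icc_subset_Icc hxt₁ ht₂y (Ioo_subset_Icc_self hu), hband hu⟩

section Pf

variable {m : ℕ} {x : ℝ × ℝ} {N : ℝ}

lemma sq_Pf_le (h1 : |x.1| ≤ N) (h2 : |x.2| ^ m ≤ 3 / 10 * N ^ 2) : Pf m x ^ 2 ≤ 2 * N ^ 4 := by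
  have hx1 : x.1 ^ 2 ≤ N ^ 2 := sq_le_sq' (abs_le.1 h1).1 (abs_le.1 h1).2
  have hx2 : |x.2 ^ m| ≤ 3 / 10 * N ^ 2 := by rwa [abs_pow]
  have hP : |Pf m x| ≤ 13 / 10 * N ^ 2 := by
    rw [Pf]
    calc |x.1 ^ 2 - x.2 ^ m| ≤ |x.1 ^ 2| + |x.2 ^ m| := abs_sub _ _
      _ ≤ 13 / 10 * N ^ 2 := by rw [abs_of_nonneg (sq_nonneg _)]; linarith
  nlinarith [sq_abs (Pf m x), abs_nonneg (Pf m x), sq_nonneg N]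

lemma le_sq_Pf (hN : 0 ≤ N) (h1 : 7 / 10 * N ≤ |x.1|) (h2 : |x.2| ^ m ≤ 3 / 10 * N ^ 2) :
    N ^ 4 / 30 ≤ Pf m x ^ 2 := by
  have hx1 : 49 / 100 * N ^ 2 ≤ x.1 ^ 2 := by
    nlinarith [sq_abs x.1, mul_le_mul h1 h1 (by positivity) (abs_nonneg x.1)]
  have hx2 : x.2 ^ m ≤ 3 / 10 * N ^ 2 := (le_abs_self _).trans (by rwa [abs_pow])
  have hP : 19 / 100 * N ^ 2 ≤ Pf m x := by rw [Pf]; linarith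
  nlinarith [pow_le_pow_left₀ (by positivity) hP 2, sq_nonneg (N ^ 2)]

end Pf

lemma cos_sq_le_two_mul_one_sub_sin (x : ℝ) : cos x ^ 2 ≤ 2 * (1 - sin x) := by
  nlinarith [sin_sq_add_cos_sq x, sin_le_one x, neg_one_le_sin x]

lemma HasDerivAt.prod_fst {f : ℝ → ℝ × ℝ} {f' : ℝ × ℝ} {x : ℝ} (h : HasDerivAt f f' x) :
    HasDerivAt (fun t => (f t).1) f'.1 x := by
  exact hasFDerivAt_fst.comp_hasDerivAt x h

lemma HasDerivAt.prod_snd {f : ℝ → ℝ × ℝ} {f' : ℝ × ℝ} {x : ℝ} (h : HasDerivAt f f' x) :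
    HasDerivAt (fun t => (f t).2) f'.2 x := by
  exact hasFDerivAt_snd.comp_hasDerivAt x h

section ArcLength

variable {L : ℝ} {ω : ℝ → ℝ × ℝ} {θ : ℝ → ℝ}

lemma setIntegral_one_sub_sin_eq (hL : 0 ≤ L)
    (hω : ∀ u ∈ Icc 0 L, HasDerivAt ω (cos (θ u), sin (θ u)) u) (hθ : ContinuousOn θ (Icc 0 L)) :
    ∫ u in Icc 0 L, (1 - sin (θ u)) = L - ((ω L).2 - (ω 0).2) := by
  have hsin : IntegrableOn (fun u => sin (θ u)) (Icc 0 L) :=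
    (continuous_sin.comp_continuousOn hθ).integrableOn_Icc
  have hFTC : ∫ u in (0 : ℝ)..L, sin (θ u) = (ω L).2 - (ω 0).2 := by
    rw [← uIcc_of_le hL] at hω hsin
    exact intervalIntegral.integral_eq_sub_of_hasDerivAt
      (fun u hu => (hω u hu).prod_snd) hsin.intervalIntegrable
  rw [integral_sub (integrableOn_const (C := (1 : ℝ)) measure_Icc_lt_top.ne) hsin,
    setIntegral_const, Real.volume_real_Icc_of_le hL, integral_Icc_eq_integral_Ioc,
    ← intervalIntegral.integral_of_le hL, hFTC, smul_eq_mul, mul_one, sub_zero]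

lemma abs_snd_sub_le (hω : ∀ u ∈ Icc 0 L, HasDerivAt ω (cos (θ u), sin (θ u)) u) {u : ℝ}
    (hu : u ∈ Icc 0 L) : |(ω u).2 - (ω 0).2| ≤ u := by
  simpa using norm_image_sub_le_of_norm_deriv_le_segment' (f := fun u => (ω u).2) (C := 1)
    (fun v hv => (hω v hv).prod_snd.hasDerivWithinAt)
    (fun v _ => by simpa using abs_sin_le_one (θ v)) u hu

lemma setIntegral_cos_sq_le {B : Set ℝ} (hBI : B ⊆ Icc 0 L) (hθ : ContinuousOn θ (Icc 0 L)) :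
    ∫ u in B, cos (θ u) ^ 2 ≤ 2 * ∫ u in Icc 0 L, (1 - sin (θ u)) := by
  have hdef : IntegrableOn (fun u => 2 * (1 - sin (θ u))) (Icc 0 L) :=
    (continuousOn_const.sub (continuous_sin.comp_continuousOn hθ)).integrableOn_Icc.const_mul 2
  calc ∫ u in B, cos (θ u) ^ 2 ≤ ∫ u in B, 2 * (1 - sin (θ u)) :=
        setIntegral_mono (((continuous_cos.comp_continuousOn hθ).pow 2).integrableOn_Icc.mono_set
          hBI) (hdef.mono_set hBI) fun u => cos_sq_le_two_mul_one_sub_sin _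
    _ ≤ ∫ u in Icc 0 L, 2 * (1 - sin (θ u)) :=
        setIntegral_mono_set hdef (Filter.Eventually.of_forall fun u =>
          show (0 : ℝ) ≤ 2 * (1 - sin (θ u)) by linarith [sin_le_one (θ u)])
          (Filter.Eventually.of_forall hBI)
    _ = 2 * ∫ u in Icc 0 L, (1 - sin (θ u)) := integral_const_mul _ _

variable {m : ℕ} {t : ℝ}

lemma measureReal_band_le
    (hω : ∀ u ∈ Icc 0 L, HasDerivAt ω (cos (θ u), sin (θ u)) u) (hθ : ContinuousOn θ (Icc 0 L))
    (hconstr : ∫ u in Icc 0 L, Pf m (ω u) ^ 2 * sin (θ u) = 0)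
    (hmax : IsMaxOn (fun u => |(ω u).1|) (Icc 0 L) t)
    (hvert : ∀ u ∈ Icc 0 L, |(ω u).2| ^ m ≤ 3 / 10 * |(ω t).1| ^ 2) (hN : 0 < |(ω t).1|) :
    volume.real (Icc 0 L ∩ (fun u => |(ω u).1|) ⁻¹' Icc (7 / 10 * |(ω t).1|) (8 / 10 * |(ω t).1|))
      ≤ 60 * ∫ u in Icc 0 L, (1 - sin (θ u)) := by
  set N := |(ω t).1|
  have hωc : ContinuousOn ω (Icc 0 L) := fun u hu => (hω u hu).continuousAt.continuousWithinAt
  set B := Icc 0 L ∩ (fun u => |(ω u).1|) ⁻¹' Icc (7 / 10 * N) (8 / 10 * N)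
  have hB : MeasurableSet B := ((continuous_abs.comp_continuousOn
    (continuous_fst.comp_continuousOn hωc)).preimage_isClosed_of_isClosed isClosed_Icc
    isClosed_Icc).measurableSet
  have hsin : ContinuousOn (fun u => sin (θ u)) (Icc 0 L) := continuous_sin.comp_continuousOn hθ
  have hPsin : IntegrableOn (fun u => Pf m (ω u) ^ 2 * sin (θ u)) (Icc 0 L) :=
    ((((continuous_fst.pow 2).sub (continuous_snd.pow m)).comp_continuousOn hωc).pow 2 |>.mul
      hsin).integrableOn_Icc
  have hband := mul_measureReal_le_of_setIntegral_mul_eq_zero (c := N ^ 4 / 30) (M := 2 * N ^ 4)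
    measurableSet_Icc measure_Icc_lt_top.ne hB inter_subset_left hsin.integrableOn_Icc hPsin
    (fun u _ => sin_le_one _) (fun u _ => sq_nonneg _)
    (fun u hu => sq_Pf_le (hmax hu) (hvert u hu))
    (fun u hu => le_sq_Pf hN.le hu.2.1 (hvert u hu.1)) hconstr
  have hN4 : 0 < N ^ 4 := by positivity
  nlinarith

theorem abs_fst_le_of_isMaxOn
    (hω : ∀ u ∈ Icc 0 L, HasDerivAt ω (cos (θ u), sin (θ u)) u) (hθ : ContinuousOn θ (Icc 0 L))
    (h0 : (ω 0).1 = 0) (hconstr : ∫ u in Icc 0 L, Pf m (ω u) ^ 2 * sin (θ u) = 0)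
    (ht : t ∈ Icc 0 L) (hmax : IsMaxOn (fun u => |(ω u).1|) (Icc 0 L) t)
    (hvert : ∀ u ∈ Icc 0 L, |(ω u).2| ^ m ≤ 3 / 10 * |(ω t).1| ^ 2) :
    |(ω t).1| ≤ 110 * ∫ u in Icc 0 L, (1 - sin (θ u)) := by
  set N := |(ω t).1|
  set B := Icc 0 L ∩ (fun u => |(ω u).1|) ⁻¹' Icc (7 / 10 * N) (8 / 10 * N)
  have hBI : B ⊆ Icc 0 L := inter_subset_left
  have hcos : ContinuousOn (fun u => cos (θ u)) (Icc 0 L) := continuous_cos.comp_continuousOn hθ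
  rcases (show 0 ≤ N from abs_nonneg _).eq_or_lt with hN | hN
  · rw [← hN]
    exact mul_nonneg (by norm_num) (setIntegral_nonneg measurableSet_Icc fun u _ =>
      sub_nonneg.2 (sin_le_one _))
  have hcross : 8 / 10 * N - 7 / 10 * N ≤ ∫ u in B, |cos (θ u)| :=
    sub_le_setIntegral_abs_deriv (fun u hu => (hω u hu).prod_fst) hcos.integrableOn_Icc
      (by rw [h0, abs_zero]; positivity) ht (by linarith)
  have hamgm := two_mul_mul_setIntegral_abs_le (1 / 5)
    ((measure_mono (μ := volume) hBI).trans_lt measure_Icc_lt_top).ne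
    (hcos.integrableOn_Icc.mono_set hBI) ((hcos.pow 2).integrableOn_Icc.mono_set hBI)
  have hband : volume.real B ≤ 60 * ∫ u in Icc 0 L, (1 - sin (θ u)) :=
    measureReal_band_le hω hθ hconstr hmax hvert hN
  have hcos2 := setIntegral_cos_sq_le hBI hθ
  -- `N / 25 ≤ |B| / 25 + ∫_B cos² θ ≤ (60 / 25 + 2) ∫ (1 - sin θ)`, whence the constant `110`
  norm_num at hamgm
  linarith

theorem sq_fst_le {ε : ℝ}
    (hω : ∀ u ∈ Icc 0 L, HasDerivAt ω (cos (θ u), sin (θ u)) u) (hθ : ContinuousOn θ (Icc 0 L))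
    (hω0 : ω 0 = (0, 0)) (hωL : (ω L).2 = ε)
    (hconstr : ∫ u in Icc 0 L, Pf m (ω u) ^ 2 * sin (θ u) = 0)
    (hLm : L ^ m ≤ 6 / 5 * ε ^ m) (hexcess : (110 * (L - ε)) ^ 2 ≤ 4 * ε ^ m)
    (ht : t ∈ Icc 0 L) : (ω t).1 ^ 2 ≤ 4 * ε ^ m := by
  have hL : 0 ≤ L := ht.1.trans ht.2
  obtain ⟨t₀, ht₀, hmax⟩ := isCompact_Icc.exists_isMaxOn (nonempty_Icc.2 hL)
    (continuous_abs.comp_continuousOn (continuous_fst.comp_continuousOn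
      fun u hu => (hω u hu).continuousAt.continuousWithinAt))
  by_contra! hbig
  have hN : 4 * ε ^ m < |(ω t₀).1| ^ 2 :=
    hbig.trans_le (by rw [← sq_abs]; exact pow_le_pow_left₀ (abs_nonneg _) (hmax ht) 2)
  have hvert : ∀ u ∈ Icc 0 L, |(ω u).2| ^ m ≤ 3 / 10 * |(ω t₀).1| ^ 2 := fun u hu => by
    have : |(ω u).2| ≤ L := by simpa [hω0] using (abs_snd_sub_le hω hu).trans hu.2
    nlinarith [pow_le_pow_left₀ (abs_nonneg _) this m]
  have hcore := abs_fst_le_of_isMaxOn hω hθ (by rw [hω0]) hconstr ht₀ hmax hvert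
  rw [setIntegral_one_sub_sin_eq hL hω hθ, hωL, hω0, sub_zero] at hcore
  nlinarith [pow_le_pow_left₀ (abs_nonneg _) hcore 2]

end ArcLength

lemma IsMinExtremal.le_length {m : ℕ} {ε L lam : ℝ} {ω : ℝ → ℝ × ℝ} {θ : ℝ → ℝ}
    (h : IsMinExtremal m ε L lam ω θ) : ε ≤ L := by
  obtain ⟨hL, hω, -, ⟨-, -, hω0, hωL, -, -⟩, -, -⟩ := h
  have := abs_snd_sub_le hω (right_mem_Icc.2 hL.le)
  rw [hωL, hω0] at this
  exact (le_abs_self _).trans (by simpa [barCurve] using this)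

lemma exists_pos_forall_mul_pow_le_one {C : ℝ} (hC : 0 < C) {k : ℕ} (hk : k ≠ 0) :
    ∃ ε₀ > 0, ∀ ε ∈ Ioo 0 ε₀, C * ε ^ k ≤ 1 := by
  refine ⟨min 1 (1 / C), by positivity, fun ε ⟨hε, hεε₀⟩ => ?_⟩
  have hε1 : ε ≤ 1 := hεε₀.le.trans (min_le_left _ _)
  have hεC : ε ≤ 1 / C := hεε₀.le.trans (min_le_right _ _)
  calc C * ε ^ k ≤ C * ε := mul_le_mul_of_nonneg_left (pow_le_of_le_one hε.le hε1 hk) hC.le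
    _ ≤ 1 := by rwa [le_div_iff₀ hC, mul_comm] at hεC

lemma one_add_pow_le_six_fifths {m : ℕ} {x : ℝ} (hx : 0 ≤ x) (hmx : m * x ≤ 1 / 6) :
    (1 + x) ^ m ≤ 6 / 5 :=
  calc (1 + x) ^ m ≤ exp x ^ m := pow_le_pow_left₀ (by linarith) (by linarith [add_one_le_exp x]) m
    _ = exp (m * x) := (exp_nat_mul x m).symm
    _ ≤ exp (1 / 6) := exp_le_exp.2 hmx
    _ ≤ 6 / 5 := by
        have := exp_bound_div_one_sub_of_interval' (x := 1 / 6) (by norm_num) (by norm_num)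
        norm_num at this ⊢
        exact this.le

lemma length_bounds_of_le {m : ℕ} (hm : 2 ≤ m) {ε L : ℝ} (hε : 0 < ε) (hεL : ε ≤ L)
    (hsmall : 200 * (m : ℝ) ^ 4 * ε ^ (m - 2) ≤ 1)
    (hlen : L ≤ ε + ((m : ℝ) / 2) ^ 2 * ε ^ (m - 1)) :
    L ≤ 2 * ε ∧ L ^ m ≤ 6 / 5 * ε ^ m ∧ (110 * (L - ε)) ^ 2 ≤ 4 * ε ^ m := by
  have hLδ : L ≤ ε * (1 + (m / 2) ^ 2 * ε ^ (m - 2)) := by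
    rw [show m - 1 = m - 2 + 1 by omega, pow_succ ε] at hlen
    linarith
  set X := ε ^ (m - 2)
  have hX : 0 ≤ X := by positivity
  have hεm : ε ^ m = X * ε ^ 2 := (pow_sub_mul_pow ε hm).symm
  have hmδ : (m : ℝ) * ((m / 2) ^ 2 * X) ≤ 1 / 6 := by
    have hm4 : (m : ℝ) ^ 3 ≤ (m : ℝ) ^ 4 := pow_le_pow_right₀ (by norm_cast; omega) (by norm_num)
    nlinarith [mul_le_mul_of_nonneg_right hm4 hX]
  have hδ : (m / 2) ^ 2 * X ≤ 1 / 6 :=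
    (le_mul_of_one_le_left (by positivity) (by norm_cast; omega)).trans hmδ
  refine ⟨by nlinarith, ?_, ?_⟩
  · calc L ^ m ≤ (ε * (1 + (m / 2) ^ 2 * X)) ^ m := pow_le_pow_left₀ (hε.le.trans hεL) hLδ m
      _ ≤ 6 / 5 * ε ^ m := by
        rw [mul_pow, mul_comm]
        exact mul_le_mul_of_nonneg_right (one_add_pow_le_six_fifths (by positivity) hmδ)
          (by positivity)
  · have hexcess : 110 * (L - ε) ≤ 110 * (ε * ((m / 2) ^ 2 * X)) := by linarith
    rw [hεm]
    nlinarith [pow_le_pow_left₀ (by linarith) hexcess 2,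
      mul_le_mul_of_nonneg_right hsmall (by positivity : 0 ≤ X * ε ^ 2)]

theorem statement6_general (m : ℕ) (hm : 5 ≤ m) :
    ∃ ε₀ > (0:ℝ), ∀ ε ∈ Set.Ioo (0:ℝ) ε₀,
      ∀ (L lam : ℝ) (ω : ℝ → ℝ × ℝ) (θ : ℝ → ℝ), IsMinExtremal m ε L lam ω θ →
        ∀ t ∈ Set.Icc (0:ℝ) L, (ω t).1 ≤ 2 * ε ^ ((m : ℝ) / 2) ∧ |(ω t).2| ≤ 2 * ε := by
  obtain ⟨ε₀, hε₀, hsmall⟩ := exists_pos_forall_mul_pow_le_one (C := 200 * (m : ℝ) ^ 4)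
    (by positivity) (k := m - 2) (by omega)
  refine ⟨ε₀, hε₀, fun ε hεI L lam ω θ h t ht => ?_⟩
  obtain ⟨hL2, hLm, hexcess⟩ := length_bounds_of_le (by omega) hεI.1 h.le_length (hsmall ε hεI)
    (h.length_le (by omega) hεI.1.le)
  obtain ⟨-, hω, hθ, ⟨-, -, hω0, hωL, -, hconstr⟩, -, -⟩ := h
  have hθc : ContinuousOn θ (Icc 0 L) := fun u hu => (hθ u hu).continuousAt.continuousWithinAt
  rw [intervalIntegral.integral_of_le (ht.1.trans ht.2), ← integral_Icc_eq_integral_Ioc] at hconstr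
  refine ⟨?_, by simpa [hω0] using (abs_snd_sub_le hω ht).trans (ht.2.trans hL2)⟩
  have hsq := sq_fst_le hω hθc hω0 (by rw [hωL]; rfl) hconstr hLm hexcess ht
  rw [← rpow_half_sq hεI.1.le, show (4 : ℝ) = 2 ^ 2 by norm_num, ← mul_pow] at hsq
  exact le_of_sq_le_sq hsq (mul_nonneg zero_le_two (rpow_nonneg hεI.1.le _))

/-- for small `ε`, any minimizing extremal satisfies `ω₁ ≤ 2ε^{m/2}` and
`|ω₂| ≤ 2ε` on `[0,L]`. -/
theorem statement6 (m : ℕ) (hodd : Odd m) (hm : 5 ≤ m) :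
    ∃ ε₀ > (0:ℝ), ∀ ε ∈ Set.Ioo (0:ℝ) ε₀,
      ∀ (L lam : ℝ) (ω : ℝ → ℝ × ℝ) (θ : ℝ → ℝ), IsMinExtremal m ε L lam ω θ →
        ∀ t ∈ Set.Icc (0:ℝ) L, (ω t).1 ≤ 2 * ε ^ ((m : ℝ) / 2) ∧ |(ω t).2| ≤ 2 * ε :=
  statement6_general m hm
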